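/- Let γ_E have density f_E(z) = (ξ_E²/2)·z^{ξ_E²/2 − 1}/(A_0^{ξ_E²} γ̄_E^{ξ_E²/2}) on (0, γ_E^max] with γ_E^max = γ̄_E A_0², and let γ_H be independent with CDF F_H(x) = min(1, (x/γ̄_H)^{ξ_H²/2} A_0^{−ξ_H²}). Suppose 0 < Ψ ≤ γ_E^max, where Ψ = (γ̄_H A_0² + 1)/2^{R_s} − 1. Then Pr[γ_H < 2^{R_s}(1+γ_E) − 1] = [ (2^{R_s}−1)^{ξ_H²/2} ξ_E² γ̄_H^{−ξ_H²/2} / (2 A_0^{ξ_H²+ξ_E²} γ̄_E^{ξ_E²/2}) ] · ∫_0^Ψ z^{ξ_E²/2−1}(1 + (2^{R_s}/(2^{R_s}−1)) z)^{ξ_H²/2} dz + F_E(γ_E^max) − F_E(Ψ), where F_E is the CDF of γ_E. -/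

import Mathlib

/-!
Condition on the eavesdropper's SNR `γE`. Almost surely `γH ≤ γ̄H A₀²`, and the outage threshold
`2^Rs (1 + z) - 1` equals `γ̄H A₀²` exactly at `z = Ψ`; so every `γE ∈ (Ψ, γE^max]` causes an
outage, which contributes `F_E(γE^max) - F_E(Ψ)`. For `γE ∈ (0, Ψ]`, independence and Fubini give
`∫₀^Ψ f_E(z) F_H(2^Rs (1 + z) - 1) dz`, and on this range `F_H` is the pure power law, so the
integrand factors as the stated constant times `z^(ξE²/2 - 1) (1 + 2^Rs z / (2^Rs - 1))^(ξH²/2)`.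
-/

open Real MeasureTheory ProbabilityTheory Filter Set
open scoped ENNReal

noncomputable def pointingErrorCDF (ξ A0 γbar x : ℝ) : ℝ := (x / γbar) ^ (ξ ^ 2 / 2) * A0 ^ (-ξ ^ 2)

noncomputable def pointingErrorPDF (ξ A0 γbar z : ℝ) : ℝ :=
  ξ ^ 2 / 2 * z ^ (ξ ^ 2 / 2 - 1) / (A0 ^ (ξ ^ 2) * γbar ^ (ξ ^ 2 / 2))

/-- `log₂ (1 + γH) - log₂ (1 + z) < Rs ↔ γH < outageThreshold Rs z`: with eavesdropper SNR `z`,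
the secrecy rate falls below `Rs` exactly when the legitimate SNR is below this level. -/
noncomputable def outageThreshold (Rs z : ℝ) : ℝ := 2 ^ Rs * (1 + z) - 1

section PointingError

variable {ξ A0 γbar : ℝ}

theorem continuous_pointingErrorCDF : Continuous (pointingErrorCDF ξ A0 γbar) :=
  ((continuous_id.div_const γbar).rpow_const fun _ => Or.inr (by positivity)).mul
    continuous_const

theorem pointingErrorCDF_nonneg (hA0 : 0 ≤ A0) (hγbar : 0 ≤ γbar) {x : ℝ} (hx : 0 ≤ x) :
    0 ≤ pointingErrorCDF ξ A0 γbar x := by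
  unfold pointingErrorCDF
  positivity

theorem pointingErrorCDF_gammaMax (hA0 : 0 < A0) (hγbar : γbar ≠ 0) :
    pointingErrorCDF ξ A0 γbar (γbar * A0 ^ 2) = 1 := by
  rw [pointingErrorCDF, mul_div_cancel_left₀ _ hγbar, ← rpow_natCast, ← rpow_mul hA0.le,
    ← rpow_add hA0]
  ring_nf
  exact rpow_zero A0

theorem pointingErrorCDF_mem_Icc (hA0 : 0 < A0) (hγbar : 0 < γbar) {x : ℝ} (hx0 : 0 ≤ x)
    (hx : x ≤ γbar * A0 ^ 2) : pointingErrorCDF ξ A0 γbar x ∈ Icc 0 1 := by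
  refine ⟨pointingErrorCDF_nonneg hA0.le hγbar.le hx0, ?_⟩
  rw [← pointingErrorCDF_gammaMax (ξ := ξ) hA0 hγbar.ne']
  unfold pointingErrorCDF
  gcongr

theorem pointingErrorPDF_nonneg (hA0 : 0 ≤ A0) (hγbar : 0 ≤ γbar) {z : ℝ} (hz : 0 ≤ z) :
    0 ≤ pointingErrorPDF ξ A0 γbar z := by
  unfold pointingErrorPDF
  positivity

theorem measurable_pointingErrorPDF : Measurable (pointingErrorPDF ξ A0 γbar) := by
  unfold pointingErrorPDF
  fun_prop

theorem integrableOn_pointingErrorPDF_Ioc (hξ : ξ ≠ 0) (a b : ℝ) :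
    IntegrableOn (pointingErrorPDF ξ A0 γbar) (Ioc a b) := by
  have : 0 < ξ ^ 2 / 2 := by positivity
  exact (((intervalIntegral.intervalIntegrable_rpow' (by linarith)).const_mul _).div_const _).1

theorem integral_pointingErrorPDF (hξ : ξ ≠ 0) (hA0 : 0 < A0) (hγbar : 0 < γbar) {a b : ℝ}
    (ha : 0 ≤ a) (hb : 0 ≤ b) :
    ∫ z in a..b, pointingErrorPDF ξ A0 γbar z
      = pointingErrorCDF ξ A0 γbar b - pointingErrorCDF ξ A0 γbar a := by
  have he : 0 < ξ ^ 2 / 2 := by positivity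
  have hpdf : pointingErrorPDF ξ A0 γbar
      = fun z => ξ ^ 2 / 2 / (A0 ^ (ξ ^ 2) * γbar ^ (ξ ^ 2 / 2)) * z ^ (ξ ^ 2 / 2 - 1) := by
    funext z
    unfold pointingErrorPDF
    ring
  rw [hpdf, intervalIntegral.integral_const_mul, integral_rpow (Or.inl (by linarith)),
    sub_add_cancel]
  simp only [pointingErrorCDF, div_rpow hb hγbar.le, div_rpow ha hγbar.le, rpow_neg hA0.le]
  have := rpow_pos_of_pos hA0 (ξ ^ 2)
  have := rpow_pos_of_pos hγbar (ξ ^ 2 / 2)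
  field_simp

theorem pointingErrorPDF_mul_pointingErrorCDF {ξH ξE γbarH γbarE : ℝ} (hA0 : 0 < A0)
    (hγbarH : 0 < γbarH) (hγbarE : 0 < γbarE) {c z w : ℝ} (hc : 0 ≤ c) (hw : 0 ≤ w) :
    pointingErrorPDF ξE A0 γbarE z * pointingErrorCDF ξH A0 γbarH (c * w)
      = c ^ (ξH ^ 2 / 2) * ξE ^ 2 * γbarH ^ (-(ξH ^ 2) / 2)
          / (2 * A0 ^ (ξH ^ 2 + ξE ^ 2) * γbarE ^ (ξE ^ 2 / 2))
        * (z ^ (ξE ^ 2 / 2 - 1) * w ^ (ξH ^ 2 / 2)) := by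
  simp only [pointingErrorPDF, pointingErrorCDF, div_rpow (mul_nonneg hc hw) hγbarH.le,
    mul_rpow hc hw, neg_div, rpow_neg hγbarH.le, rpow_neg hA0.le, rpow_add hA0]
  have := rpow_pos_of_pos hA0 (ξH ^ 2)
  have := rpow_pos_of_pos hA0 (ξE ^ 2)
  have := rpow_pos_of_pos hγbarH (ξH ^ 2 / 2)
  have := rpow_pos_of_pos hγbarE (ξE ^ 2 / 2)
  field_simp

end PointingError

section OutageThreshold

variable {Rs : ℝ}

theorem strictMono_outageThreshold : StrictMono (outageThreshold Rs) := fun _ _ h => by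
  unfold outageThreshold
  gcongr

theorem outageThreshold_div_rpow_sub_one (c : ℝ) :
    outageThreshold Rs ((c + 1) / 2 ^ Rs - 1) = c := by
  have : (2 : ℝ) ^ Rs ≠ 0 := by positivity
  unfold outageThreshold
  field_simp
  ring

theorem outageThreshold_pos (hRs : 0 < Rs) {z : ℝ} (hz : 0 ≤ z) : 0 < outageThreshold Rs z := by
  have : 1 < (2 : ℝ) ^ Rs := one_lt_rpow (by norm_num) hRs
  unfold outageThreshold
  nlinarith

theorem outageThreshold_eq_mul (hRs : 0 < Rs) (z : ℝ) :
    outageThreshold Rs z = (2 ^ Rs - 1) * (1 + 2 ^ Rs / (2 ^ Rs - 1) * z) := by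
  have : (2 : ℝ) ^ Rs - 1 ≠ 0 := by linarith [one_lt_rpow (by norm_num : (1 : ℝ) < 2) hRs]
  unfold outageThreshold
  field_simp
  ring

theorem setIntegral_pointingErrorPDF_mul_pointingErrorCDF_outageThreshold
    {ξH ξE A0 γbarH γbarE Ψ : ℝ} (hRs : 0 < Rs) (hA0 : 0 < A0) (hγbarH : 0 < γbarH)
    (hγbarE : 0 < γbarE) :
    ∫ y in Ioc 0 Ψ,
        pointingErrorPDF ξE A0 γbarE y * pointingErrorCDF ξH A0 γbarH (outageThreshold Rs y)
      = (2 ^ Rs - 1) ^ (ξH ^ 2 / 2) * ξE ^ 2 * γbarH ^ (-(ξH ^ 2) / 2)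
          / (2 * A0 ^ (ξH ^ 2 + ξE ^ 2) * γbarE ^ (ξE ^ 2 / 2))
        * ∫ z in Ioo 0 Ψ,
            z ^ (ξE ^ 2 / 2 - 1) * (1 + 2 ^ Rs / (2 ^ Rs - 1) * z) ^ (ξH ^ 2 / 2) := by
  rw [← integral_Ioc_eq_integral_Ioo, ← integral_const_mul]
  refine setIntegral_congr_fun measurableSet_Ioc fun z hz => ?_
  have h2Rs : 1 < (2 : ℝ) ^ Rs := one_lt_rpow (by norm_num) hRs
  have hw : 0 ≤ 1 + 2 ^ Rs / (2 ^ Rs - 1) * z :=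
    add_nonneg zero_le_one (mul_nonneg (div_nonneg (by positivity) (by linarith)) hz.1.le)
  rw [outageThreshold_eq_mul hRs,
    pointingErrorPDF_mul_pointingErrorCDF hA0 hγbarH hγbarE (by linarith) hw]

end OutageThreshold

section Probability

variable {Ω : Type*} [MeasurableSpace Ω] {μ : Measure Ω}

theorem toReal_measure_lt_of_cdf_eq [IsFiniteMeasure μ] {X : Ω → ℝ} {F : ℝ → ℝ} {a x : ℝ}
    (hcdf : ∀ y, a ≤ y → (μ {ω | X ω ≤ y}).toReal = F y)
    (hF : ContinuousWithinAt F (Iio x) x) (hax : a < x) :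
    (μ {ω | X ω < x}).toReal = F x := by
  refine le_antisymm ?_ ?_
  · rw [← hcdf x hax.le]
    exact ENNReal.toReal_mono (measure_ne_top μ _) (measure_mono fun _ (hω : _ < x) => hω.le)
  · refine le_of_tendsto hF (eventually_of_mem (Ioo_mem_nhdsLT hax) fun y hy => ?_)
    rw [← hcdf y hy.1.le]
    exact ENNReal.toReal_mono (measure_ne_top μ _)
      (measure_mono fun ω (hω : X ω ≤ y) => hω.trans_lt hy.2)

section PointingErrorLaw

variable {X : Ω → ℝ} {ξ A0 γbar : ℝ}

theorem ae_le_gammaMax_of_pointingErrorCDF [IsProbabilityMeasure μ] (hX : Measurable X)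
    (hA0 : 0 < A0) (hγbar : 0 < γbar)
    (hcdf : ∀ x, 0 ≤ x → (μ {ω | X ω ≤ x}).toReal = min 1 (pointingErrorCDF ξ A0 γbar x)) :
    ∀ᵐ ω ∂μ, X ω ≤ γbar * A0 ^ 2 := by
  have h := hcdf (γbar * A0 ^ 2) (by positivity)
  rw [pointingErrorCDF_gammaMax hA0 hγbar.ne', min_self, ENNReal.toReal_eq_one_iff] at h
  exact (ae_iff_prob_eq_one (measurableSet_setOfPred.1 (measurableSet_le hX measurable_const))).2 h

theorem measure_lt_eq_ofReal_pointingErrorCDF [IsFiniteMeasure μ] (hA0 : 0 < A0)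
    (hγbar : 0 < γbar)
    (hcdf : ∀ x, 0 ≤ x → (μ {ω | X ω ≤ x}).toReal = min 1 (pointingErrorCDF ξ A0 γbar x))
    {x : ℝ} (hx0 : 0 < x) (hx : x ≤ γbar * A0 ^ 2) :
    μ {ω | X ω < x} = ENNReal.ofReal (pointingErrorCDF ξ A0 γbar x) := by
  rw [← ENNReal.ofReal_toReal (measure_ne_top μ _),
    toReal_measure_lt_of_cdf_eq hcdf
      (continuous_const.min continuous_pointingErrorCDF).continuousWithinAt hx0,
    min_eq_right (pointingErrorCDF_mem_Icc hA0 hγbar hx0.le hx).2]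

end PointingErrorLaw

section Density

variable {α : Type*} [MeasurableSpace α] {ν : Measure α} {X : Ω → α} {f : α → ℝ} {T : Set α}

theorem ae_mem_of_toReal_measure_preimage [IsFiniteMeasure μ] (hT : MeasurableSet T)
    (hlaw : ∀ s, MeasurableSet s → (μ (X ⁻¹' s)).toReal = ∫ z in s ∩ T, f z ∂ν) :
    ∀ᵐ ω ∂μ, X ω ∈ T := by
  have h := hlaw Tᶜ hT.compl
  rw [compl_inter_self, Measure.restrict_empty, integral_zero_measure,
    ENNReal.toReal_eq_zero_iff] at h
  exact (measure_eq_zero_iff_ae_notMem.1 (h.resolve_right (measure_ne_top μ _))).mono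
    fun _ => not_not.1

theorem map_eq_withDensity_of_toReal_measure_preimage [IsFiniteMeasure μ] (hX : Measurable X)
    (hT : MeasurableSet T) (hf : IntegrableOn f T ν) (hf0 : ∀ z ∈ T, 0 ≤ f z)
    (hlaw : ∀ s, MeasurableSet s → (μ (X ⁻¹' s)).toReal = ∫ z in s ∩ T, f z ∂ν) :
    μ.map X = (ν.restrict T).withDensity fun z => ENNReal.ofReal (f z) := by
  ext s hs
  rw [Measure.map_apply hX hs, withDensity_apply _ hs, Measure.restrict_restrict hs,
    ← ofReal_integral_eq_lintegral_ofReal (hf.mono_set inter_subset_right)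
      ((ae_restrict_iff' (hs.inter hT)).2 (ae_of_all _ fun z hz => hf0 z hz.2)),
    ← hlaw s hs, ENNReal.ofReal_toReal (measure_ne_top μ _)]

theorem toReal_setLIntegral_withDensity {h : α → ℝ} {U : Set α} (hf : IntegrableOn f T ν)
    (hfm : Measurable f) (hf0 : ∀ z ∈ T, 0 ≤ f z) (hhm : Measurable h) (hU : MeasurableSet U)
    (hUT : U ⊆ T) (hh : ∀ y ∈ U, h y ∈ Icc 0 1) :
    (∫⁻ y in U, ENNReal.ofReal (h y)
        ∂(ν.restrict T).withDensity fun z => ENNReal.ofReal (f z)).toReal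
      = ∫ y in U, f y * h y ∂ν := by
  have hint : IntegrableOn (fun y => f y * h y) U ν :=
    (hf.mono_set hUT).mul_bdd hhm.aestronglyMeasurable ((ae_restrict_iff' hU).2 (ae_of_all _
      fun y hy => by rw [norm_of_nonneg (hh y hy).1]; exact (hh y hy).2))
  have hnonneg : ∀ y ∈ U, 0 ≤ f y * h y := fun y hy => mul_nonneg (hf0 y (hUT hy)) (hh y hy).1
  rw [restrict_withDensity hU, Measure.restrict_restrict_of_subset hUT,
    lintegral_withDensity_eq_lintegral_mul _ hfm.ennreal_ofReal hhm.ennreal_ofReal]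
  simp only [Pi.mul_apply]
  rw [setLIntegral_congr_fun hU (g := fun y => ENNReal.ofReal (f y * h y))
      fun y hy => (ENNReal.ofReal_mul (hf0 y (hUT hy))).symm,
    ← ofReal_integral_eq_lintegral_ofReal hint ((ae_restrict_iff' hU).2 (ae_of_all _ hnonneg)),
    ENNReal.toReal_ofReal (setIntegral_nonneg hU hnonneg)]

end Density

theorem ProbabilityTheory.IndepFun.measure_mem_eq_lintegral [IsFiniteMeasure μ] {β γ : Type*}
    [MeasurableSpace β] [MeasurableSpace γ] {X : Ω → β} {Y : Ω → γ} (hXY : IndepFun X Y μ)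
    (hX : Measurable X) (hY : Measurable Y) {S : Set (β × γ)} (hS : MeasurableSet S) :
    μ {ω | (X ω, Y ω) ∈ S} = ∫⁻ y, μ {ω | (X ω, y) ∈ S} ∂μ.map Y := by
  change μ ((fun ω => (X ω, Y ω)) ⁻¹' S) = _
  rw [← Measure.map_apply (hX.prodMk hY) hS,
    (indepFun_iff_map_prod_eq_prod_map_map hX.aemeasurable hY.aemeasurable).1 hXY,
    Measure.prod_apply_symm hS]
  exact lintegral_congr fun y => Measure.map_apply hX (measurable_prodMk_right hS)

section RealValued

variable {X Y : Ω → ℝ} {g : ℝ → ℝ}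

theorem ProbabilityTheory.IndepFun.measure_lt_comp_inter_preimage [IsFiniteMeasure μ]
    (hXY : IndepFun X Y μ) (hX : Measurable X) (hY : Measurable Y) (hg : Measurable g)
    {U : Set ℝ} (hU : MeasurableSet U) :
    μ ({ω | X ω < g (Y ω)} ∩ Y ⁻¹' U) = ∫⁻ y in U, μ {ω | X ω < g y} ∂μ.map Y := by
  have hS : MeasurableSet {p : ℝ × ℝ | p.1 < g p.2 ∧ p.2 ∈ U} :=
    (measurableSet_lt measurable_fst (hg.comp measurable_snd)).inter (measurable_snd hU)
  rw [← lintegral_indicator hU]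
  convert hXY.measure_mem_eq_lintegral hX hY hS using 1
  · rfl
  · refine lintegral_congr fun y => ?_
    by_cases hy : y ∈ U <;> simp [hy]

theorem ProbabilityTheory.IndepFun.toReal_measure_lt_comp_inter_preimage [IsFiniteMeasure μ]
    (hXY : IndepFun X Y μ) (hX : Measurable X) (hY : Measurable Y) (hg : Measurable g)
    {f h : ℝ → ℝ} {T U : Set ℝ} (hT : MeasurableSet T) (hf : IntegrableOn f T)
    (hfm : Measurable f) (hf0 : ∀ z ∈ T, 0 ≤ f z)
    (hlaw : ∀ s, MeasurableSet s → (μ (Y ⁻¹' s)).toReal = ∫ z in s ∩ T, f z)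
    (hhm : Measurable h) (hU : MeasurableSet U) (hUT : U ⊆ T) (hh : ∀ y ∈ U, h y ∈ Icc 0 1)
    (hcdf : ∀ y ∈ U, μ {ω | X ω < g y} = ENNReal.ofReal (h y)) :
    (μ ({ω | X ω < g (Y ω)} ∩ Y ⁻¹' U)).toReal = ∫ y in U, f y * h y := by
  rw [hXY.measure_lt_comp_inter_preimage hX hY hg hU, setLIntegral_congr_fun hU hcdf,
    map_eq_withDensity_of_toReal_measure_preimage hY hT hf hf0 hlaw]
  exact toReal_setLIntegral_withDensity hf hfm hf0 hhm hU hUT hh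

/-- On `{Y ∈ (Ψ, M]}` the event `X < g Y` holds almost surely. -/
theorem measure_lt_comp_eq_add_measure_preimage_Ioc (hY : Measurable Y) (hg : StrictMono g)
    {a Ψ M : ℝ} (hY_ae : ∀ᵐ ω ∂μ, Y ω ∈ Ioc a M) (hX_ae : ∀ᵐ ω ∂μ, X ω ≤ g Ψ) :
    μ {ω | X ω < g (Y ω)}
      = μ ({ω | X ω < g (Y ω)} ∩ Y ⁻¹' Ioc a Ψ) + μ (Y ⁻¹' Ioc Ψ M) := by
  rw [← measure_inter_add_sdiff _ (hY measurableSet_Ioc)]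
  refine congrArg _ (measure_congr (eventuallyEq_set.2 ?_))
  filter_upwards [hX_ae, hY_ae] with ω hX hY
  simp only [Set.mem_sdiff, mem_ofPred_eq, mem_preimage, mem_Ioc] at hY ⊢
  constructor
  · rintro ⟨-, hlow⟩
    exact ⟨lt_of_not_ge fun h => hlow ⟨hY.1, h⟩, hY.2⟩
  · rintro ⟨hΨ, -⟩
    exact ⟨hX.trans_lt (hg hΨ), fun h => h.2.not_gt hΨ⟩

end RealValued

end Probability

theorem thz_sop_case1_general
    {Ω : Type*} [MeasurableSpace Ω] (μ : Measure Ω) [IsProbabilityMeasure μ]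
    (γH γE : Ω → ℝ) (hmH : Measurable γH) (hmE : Measurable γE)
    (ξH ξE A0 γbarH γbarE Rs : ℝ)
    (hξE : 0 < ξE) (hA0 : 0 < A0)
    (hγbarH : 0 < γbarH) (hγbarE : 0 < γbarE) (hRs : 0 < Rs)
    (hindep : ProbabilityTheory.IndepFun γH γE μ)
    (hEdens : ∀ s : Set ℝ, MeasurableSet s →
      (μ (γE ⁻¹' s)).toReal
        = ∫ z in s ∩ Set.Ioc 0 (γbarE * A0 ^ 2),
            ξE ^ 2 / 2 * z ^ (ξE ^ 2 / 2 - 1) / (A0 ^ (ξE ^ 2) * γbarE ^ (ξE ^ 2 / 2)))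
    (hHcdf : ∀ x : ℝ, 0 ≤ x →
      (μ {ω | γH ω ≤ x}).toReal = min 1 ((x / γbarH) ^ (ξH ^ 2 / 2) * A0 ^ (-ξH ^ 2)))
    (hΨpos : 0 < (γbarH * A0 ^ 2 + 1) / 2 ^ Rs - 1)
    (hΨle : (γbarH * A0 ^ 2 + 1) / 2 ^ Rs - 1 ≤ γbarE * A0 ^ 2) :
    (μ {ω | γH ω < 2 ^ Rs * (1 + γE ω) - 1}).toReal
      = (2 ^ Rs - 1) ^ (ξH ^ 2 / 2) * ξE ^ 2 * γbarH ^ (-(ξH ^ 2) / 2)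
          / (2 * A0 ^ (ξH ^ 2 + ξE ^ 2) * γbarE ^ (ξE ^ 2 / 2))
        * (∫ z in Set.Ioo (0 : ℝ) ((γbarH * A0 ^ 2 + 1) / 2 ^ Rs - 1),
            z ^ (ξE ^ 2 / 2 - 1) * (1 + 2 ^ Rs / (2 ^ Rs - 1) * z) ^ (ξH ^ 2 / 2))
        + (γbarE * A0 ^ 2 / γbarE) ^ (ξE ^ 2 / 2) * A0 ^ (-ξE ^ 2)
        - (((γbarH * A0 ^ 2 + 1) / 2 ^ Rs - 1) / γbarE) ^ (ξE ^ 2 / 2)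
            * A0 ^ (-ξE ^ 2) := by
  set Ψ := (γbarH * A0 ^ 2 + 1) / 2 ^ Rs - 1
  set M := γbarE * A0 ^ 2
  change (μ {ω | γH ω < outageThreshold Rs (γE ω)}).toReal = _
  change ∀ s, _ → _ = ∫ z in s ∩ Ioc 0 M, pointingErrorPDF ξE A0 γbarE z at hEdens
  change ∀ x, 0 ≤ x → _ = min 1 (pointingErrorCDF ξH A0 γbarH x) at hHcdf
  have hgΨ : outageThreshold Rs Ψ = γbarH * A0 ^ 2 := outageThreshold_div_rpow_sub_one _
  have hg_mem (y : ℝ) (hy : y ∈ Ioc 0 Ψ) :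
      0 < outageThreshold Rs y ∧ outageThreshold Rs y ≤ γbarH * A0 ^ 2 :=
    ⟨outageThreshold_pos hRs hy.1.le, hgΨ ▸ strictMono_outageThreshold.monotone hy.2⟩
  have hmg : Measurable (outageThreshold Rs) := strictMono_outageThreshold.monotone.measurable
  have hlow := hindep.toReal_measure_lt_comp_inter_preimage
    (h := fun y => pointingErrorCDF ξH A0 γbarH (outageThreshold Rs y)) hmH hmE hmg
    measurableSet_Ioc (integrableOn_pointingErrorPDF_Ioc hξE.ne' 0 M) measurable_pointingErrorPDF
    (fun z hz => pointingErrorPDF_nonneg hA0.le hγbarE.le hz.1.le) hEdens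
    (continuous_pointingErrorCDF.measurable.comp hmg) measurableSet_Ioc (Ioc_subset_Ioc_right hΨle)
    (fun y hy => pointingErrorCDF_mem_Icc hA0 hγbarH (hg_mem y hy).1.le (hg_mem y hy).2)
    (fun y hy => measure_lt_eq_ofReal_pointingErrorCDF hA0 hγbarH hHcdf (hg_mem y hy).1
      (hg_mem y hy).2)
  have hhigh : (μ (γE ⁻¹' Ioc Ψ M)).toReal
      = pointingErrorCDF ξE A0 γbarE M - pointingErrorCDF ξE A0 γbarE Ψ := by
    rw [hEdens _ measurableSet_Ioc, inter_eq_left.2 (Ioc_subset_Ioc_left hΨpos.le),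
      ← intervalIntegral.integral_of_le hΨle,
      integral_pointingErrorPDF hξE.ne' hA0 hγbarE hΨpos.le (hΨpos.le.trans hΨle)]
  rw [measure_lt_comp_eq_add_measure_preimage_Ioc hmE strictMono_outageThreshold
      (ae_mem_of_toReal_measure_preimage measurableSet_Ioc hEdens)
      (hgΨ ▸ ae_le_gammaMax_of_pointingErrorCDF hmH hA0 hγbarH hHcdf),
    ENNReal.toReal_add (measure_ne_top μ _) (measure_ne_top μ _), hlow, hhigh,
    setIntegral_pointingErrorPDF_mul_pointingErrorCDF_outageThreshold hRs hA0 hγbarH hγbarE,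
    ← add_sub_assoc]
  rfl

/-- THz secrecy outage, Case 1 of Proposition 2 (`0 < Ψ ≤ γ_E^max`). -/
theorem thz_sop_case1
    {Ω : Type*} [MeasurableSpace Ω] (μ : Measure Ω) [IsProbabilityMeasure μ]
    (γH γE : Ω → ℝ) (hmH : Measurable γH) (hmE : Measurable γE)
    (ξH ξE A0 γbarH γbarE Rs : ℝ)
    (hξH : 0 < ξH) (hξE : 0 < ξE) (hA0 : 0 < A0) (hA0' : A0 ≤ 1)
    (hγbarH : 0 < γbarH) (hγbarE : 0 < γbarE) (hRs : 0 < Rs)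
    (hindep : ProbabilityTheory.IndepFun γH γE μ)
    (hEdens : ∀ s : Set ℝ, MeasurableSet s →
      (μ (γE ⁻¹' s)).toReal
        = ∫ z in s ∩ Set.Ioc 0 (γbarE * A0 ^ 2),
            ξE ^ 2 / 2 * z ^ (ξE ^ 2 / 2 - 1) / (A0 ^ (ξE ^ 2) * γbarE ^ (ξE ^ 2 / 2)))
    (hHcdf : ∀ x : ℝ, 0 ≤ x →
      (μ {ω | γH ω ≤ x}).toReal = min 1 ((x / γbarH) ^ (ξH ^ 2 / 2) * A0 ^ (-ξH ^ 2)))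
    (hΨpos : 0 < (γbarH * A0 ^ 2 + 1) / 2 ^ Rs - 1)
    (hΨle : (γbarH * A0 ^ 2 + 1) / 2 ^ Rs - 1 ≤ γbarE * A0 ^ 2) :
    (μ {ω | γH ω < 2 ^ Rs * (1 + γE ω) - 1}).toReal
      = (2 ^ Rs - 1) ^ (ξH ^ 2 / 2) * ξE ^ 2 * γbarH ^ (-(ξH ^ 2) / 2)
          / (2 * A0 ^ (ξH ^ 2 + ξE ^ 2) * γbarE ^ (ξE ^ 2 / 2))
        * (∫ z in Set.Ioo (0 : ℝ) ((γbarH * A0 ^ 2 + 1) / 2 ^ Rs - 1),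
            z ^ (ξE ^ 2 / 2 - 1) * (1 + 2 ^ Rs / (2 ^ Rs - 1) * z) ^ (ξH ^ 2 / 2))
        + (γbarE * A0 ^ 2 / γbarE) ^ (ξE ^ 2 / 2) * A0 ^ (-ξE ^ 2)
        - (((γbarH * A0 ^ 2 + 1) / 2 ^ Rs - 1) / γbarE) ^ (ξE ^ 2 / 2)
            * A0 ^ (-ξE ^ 2) :=
  thz_sop_case1_general μ γH γE hmH hmE ξH ξE A0 γbarH γbarE Rs hξE hA0 hγbarH hγbarE hRs hindep
    hEdens hHcdf hΨpos hΨle
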